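/- arXiv:math/0609485 — 4 statements merged into one kernel-verified Lean document; each statement's English description precedes it below -/
import Mathlib

section
/- For every positive integer d, the set E_d is an open subset of ℝ². -/
/-!
By the implicit function theorem, a nondegenerate positive root of `H_{(a,b,d)}` persists, close
to where it was, when `(a, b)` is perturbed slightly; positivity and nondegeneracy are open
conditions, so the perturbed root is again a nondegenerate positive root. Finitely many roots have
pairwise disjoint neighbourhoods, so the perturbed roots stay distinct, and the number of
nondegenerate positive roots can only increase near any `(a, b)`.
-/

noncomputable section

open Set

/-- First polynomial of the Haas system with parameters `(a, b, d)`. -/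
def h₁ (a : ℝ) (d : ℕ) (x y : ℝ) : ℝ := x ^ (2 * d) + a * y ^ d - y

/-- Second polynomial of the Haas system with parameters `(a, b, d)`. -/
def h₂ (b : ℝ) (d : ℕ) (x y : ℝ) : ℝ := y ^ (2 * d) + b * x ^ d - x

/-- The Jacobian matrix of the Haas system `(h₁, h₂)` at `(x, y)`. -/
def haasJac (a b : ℝ) (d : ℕ) (x y : ℝ) : Matrix (Fin 2) (Fin 2) ℝ :=
  !![2 * (d : ℝ) * x ^ (2 * d - 1), a * (d : ℝ) * y ^ (d - 1) - 1;
     b * (d : ℝ) * x ^ (d - 1) - 1, 2 * (d : ℝ) * y ^ (2 * d - 1)]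

/-- `p` is a nondegenerate positive root of the Haas system `H_{(a,b,d)}`. -/
def IsNondegPosRoot (a b : ℝ) (d : ℕ) (p : ℝ × ℝ) : Prop :=
  0 < p.1 ∧ 0 < p.2 ∧ h₁ a d p.1 p.2 = 0 ∧ h₂ b d p.1 p.2 = 0 ∧
    IsUnit (haasJac a b d p.1 p.2)

/-- `E d` is the set of parameter pairs `(a, b)` for which the Haas system
`H_{(a,b,d)}` has at least 5 nondegenerate positive roots. -/
def E (d : ℕ) : Set (ℝ × ℝ) :=
  {q | 5 ≤ {p : ℝ × ℝ | IsNondegPosRoot q.1 q.2 d p}.encard}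

open Filter Topology

theorem isOpen_setOf_natCast_le_encard {P X : Type*} [TopologicalSpace P] [TopologicalSpace X]
    [T2Space X] {S : P → Set X}
    (hS : ∀ q₀, ∀ p ∈ S q₀, ∀ U ∈ 𝓝 p, ∀ᶠ q in 𝓝 q₀, (S q ∩ U).Nonempty) (n : ℕ) :
    IsOpen {q | (n : ℕ∞) ≤ (S q).encard} := by
  refine isOpen_iff_mem_nhds.2 fun q₀ hq₀ => ?_
  obtain ⟨t, hts, htn⟩ := exists_subset_encard_eq hq₀
  have ht : t.Finite := finite_of_encard_eq_coe htn
  obtain ⟨U, hU, hdisj⟩ := ht.t2_separation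
  have hmeet : ∀ᶠ q in 𝓝 q₀, ∀ p ∈ t, (S q ∩ U p).Nonempty :=
    (eventually_all_finite ht).2 fun p hp => hS q₀ p (hts hp) (U p) ((hU p).2.mem_nhds (hU p).1)
  filter_upwards [hmeet] with q hq
  choose! g hgS hgU using hq
  calc (n : ℕ∞) = t.encard := htn.symm
    _ ≤ (S q).encard := encard_le_encard_of_injOn hgS fun p hp p' hp' hpp' =>
      hdisj.elim hp hp' (not_disjoint_iff.2 ⟨g p, hgU p hp, hpp' ▸ hgU p' hp'⟩)

section

variable {𝕜 : Type*} [NontriviallyNormedField 𝕜]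
  {E₁ : Type*} [NormedAddCommGroup E₁] [NormedSpace 𝕜 E₁] [CompleteSpace E₁]
  {E₂ : Type*} [NormedAddCommGroup E₂] [NormedSpace 𝕜 E₂] [CompleteSpace E₂]
  {F : Type*} [NormedAddCommGroup F] [NormedSpace 𝕜 F] [CompleteSpace F]

theorem HasStrictFDerivAt.eventually_exists_mem_apply_eq {f : E₁ × E₂ → F}
    {f' : E₁ × E₂ →L[𝕜] F} {u : E₁ × E₂} (hf : HasStrictFDerivAt f f' u)
    (hf' : (f' ∘L .inr 𝕜 E₁ E₂).IsInvertible) {W : Set (E₁ × E₂)} (hW : W ∈ 𝓝 u) :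
    ∀ᶠ x in 𝓝 u.1, ∃ y, (x, y) ∈ W ∧ f (x, y) = f u := by
  have hψ : Tendsto (fun x => (x, hf.implicitFunctionOfProdDomain hf' x)) (𝓝 u.1) (𝓝 u) :=
    tendsto_id.prodMk_nhds (hf.tendsto_implicitFunctionOfProdDomain hf')
  filter_upwards [hψ hW, hf.eventually_apply_implicitFunctionOfProdDomain hf'] with x hxW hx
  exact ⟨_, hxW, hx⟩

end

def haasMap (d : ℕ) (w : (ℝ × ℝ) × (ℝ × ℝ)) : ℝ × ℝ :=
  (h₁ w.1.1 d w.2.1 w.2.2, h₂ w.1.2 d w.2.1 w.2.2)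

theorem contDiff_haasMap (d : ℕ) : ContDiff ℝ 1 (haasMap d) := by
  unfold haasMap h₁ h₂
  fun_prop

theorem hasFDerivAt_haasMap_right (d : ℕ) (q p : ℝ × ℝ) :
    HasFDerivAt (fun p => haasMap d (q, p))
      (Matrix.toLin (Module.Basis.finTwoProd ℝ) (Module.Basis.finTwoProd ℝ)
        (haasJac q.1 q.2 d p.1 p.2)).toContinuousLinearMap p := by
  have hx : HasFDerivAt (fun p : ℝ × ℝ => p.1) (.fst ℝ ℝ ℝ) p := hasFDerivAt_fst
  have hy : HasFDerivAt (fun p : ℝ × ℝ => p.2) (.snd ℝ ℝ ℝ) p := hasFDerivAt_snd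
  have h₁' := ((hx.pow (2 * d)).add ((hy.pow d).const_mul q.1)).sub hy
  have h₂' := ((hy.pow (2 * d)).add ((hx.pow d).const_mul q.2)).sub hx
  refine (h₁'.prodMk h₂').congr_fderiv ?_
  ext <;>
    simp only [nsmul_eq_mul, Nat.cast_mul, Nat.cast_ofNat, ContinuousLinearMap.comp_apply,
      ContinuousLinearMap.inl_apply, ContinuousLinearMap.inr_apply,
      ContinuousLinearMap.prod_apply, sub_apply, add_apply, smul_apply,
      ContinuousLinearMap.coe_fst', ContinuousLinearMap.coe_snd',
      smul_eq_mul, mul_one, mul_zero, add_zero, sub_zero, zero_add, haasJac,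
      LinearMap.coe_toContinuousLinearMap', Matrix.toLin_apply, Matrix.mulVec, dotProduct,
      Matrix.of_apply, Matrix.cons_val', Matrix.cons_val_fin_one,
      Module.Basis.coe_finTwoProd_repr, Fin.sum_univ_two, Matrix.cons_val_zero,
      Matrix.cons_val_one, Module.Basis.finTwoProd_zero, Module.Basis.finTwoProd_one,
      Prod.smul_mk, Prod.mk_add_mk] <;>
    ring

theorem isInvertible_fderiv_haasMap_comp_inr {d : ℕ} {q p : ℝ × ℝ}
    (h : IsUnit (haasJac q.1 q.2 d p.1 p.2)) :
    (fderiv ℝ (haasMap d) (q, p) ∘L .inr ℝ (ℝ × ℝ) (ℝ × ℝ)).IsInvertible := by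
  have hcomp := ((contDiff_haasMap d).differentiable one_ne_zero (q, p)).hasFDerivAt.comp p
    (hasFDerivAt_prodMk_right q p)
  rw [hcomp.unique (hasFDerivAt_haasMap_right d q p)]
  refine ⟨_, ContinuousLinearMap.coe_toContinuousLinearEquivOfDetNeZero _ ?_⟩
  rw [ContinuousLinearMap.det, LinearMap.coe_toContinuousLinearMap, LinearMap.det_toLin]
  exact ((Matrix.isUnit_iff_isUnit_det _).1 h).ne_zero

theorem isOpen_setOf_isUnit_haasJac (d : ℕ) :
    IsOpen {w : (ℝ × ℝ) × (ℝ × ℝ) | IsUnit (haasJac w.1.1 w.1.2 d w.2.1 w.2.2)} := by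
  simp only [Matrix.isUnit_iff_isUnit_det, isUnit_iff_ne_zero, haasJac, Matrix.det_fin_two_of]
  exact isOpen_ne_fun (by fun_prop) continuous_const

theorem eventually_exists_isNondegPosRoot_mem {d : ℕ} {q₀ p₀ : ℝ × ℝ}
    (h : IsNondegPosRoot q₀.1 q₀.2 d p₀) {U : Set (ℝ × ℝ)} (hU : U ∈ 𝓝 p₀) :
    ∀ᶠ q in 𝓝 q₀, ({p | IsNondegPosRoot q.1 q.2 d p} ∩ U).Nonempty := by
  obtain ⟨hx, hy, h₁0, h₂0, hJ⟩ := h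
  have hf := (contDiff_haasMap d).contDiffAt.hasStrictFDerivAt (x := (q₀, p₀)) one_ne_zero
  have hopen : IsOpen {w : (ℝ × ℝ) × (ℝ × ℝ) |
      0 < w.2.1 ∧ 0 < w.2.2 ∧ IsUnit (haasJac w.1.1 w.1.2 d w.2.1 w.2.2)} :=
    (isOpen_lt continuous_const continuous_snd.fst).inter
      ((isOpen_lt continuous_const continuous_snd.snd).inter (isOpen_setOf_isUnit_haasJac d))
  have hW := inter_mem (hopen.mem_nhds ⟨hx, hy, hJ⟩) (continuous_snd.tendsto (q₀, p₀) hU)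
  have hzero : haasMap d (q₀, p₀) = 0 := Prod.ext h₁0 h₂0
  filter_upwards [hf.eventually_exists_mem_apply_eq (isInvertible_fderiv_haasMap_comp_inr hJ) hW]
    with q ⟨p, ⟨⟨hpx, hpy, hpJ⟩, hpU⟩, hp⟩
  rw [hzero] at hp
  exact ⟨p, ⟨hpx, hpy, congrArg Prod.fst hp, congrArg Prod.snd hp, hpJ⟩, hpU⟩

/-- For every positive integer `d`, the set `E d` is open. -/
theorem E_isOpen : ∀ d : ℕ, 0 < d → IsOpen (E d) := by
  intro d _
  exact isOpen_setOf_natCast_le_encard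
    (fun _ _ hp _ hU => eventually_exists_isNondegPosRoot_mem hp hU) 5
end
end

section
/- The set E₂ is empty: for all real numbers a and b, the system (x⁴ + a·y² − y, y⁴ + b·x² − x) has at most 4 nondegenerate roots (x,y) with x > 0 and y > 0. -/
noncomputable section

open Set

/-!
Positive roots lie on the curve `y = (x - b x²) ^ (1/4)`, `0 < x`, `b x < 1`, and their
abscissae are zeros of `Haas.reduced a b x = h₁ a 2 x y / y²`, whose derivative no longer
involves `a`. By Rolle, between consecutive zeros lies a critical point, where
`(2 b x - 1) y = 2 x⁴ (7 - 6 b x)` with `2 b x > 1`; taking fourth powers gives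
`Haas.critRatio b x = 1`. By Rolle again, between consecutive solutions of this rational
equation lies a critical point of `Haas.critRatio b`, i.e. a root `t = b x` of the cubic
`168 t³ - 428 t² + 366 t - 105`, which is strictly increasing. Hence there are at most
`1 + 1 + 1 = 3` positive roots.
-/

theorem Set.encard_le_encard_add_one_of_interleaved {α : Type*} [LinearOrder α] {s t : Set α}
    (h : ∀ x ∈ s, ∀ y ∈ s, x < y → ∃ z ∈ t, x < z ∧ z < y) :
    s.encard ≤ t.encard + 1 := by
  obtain ht | ht := t.finite_or_infinite
  swap
  · simp [ht.encard_eq]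
  by_contra! hlt
  obtain ⟨u, hus, hu⟩ := exists_subset_encard_eq (Order.add_one_le_of_lt hlt)
  have hufin : u.Finite := finite_of_encard_eq_coe (k := ht.toFinset.card + 2) (by
    rw [hu, ht.encard_eq_coe_toFinset_card]; norm_cast)
  have hcard := Finset.card_le_of_interleaved (s := hufin.toFinset) (t := ht.toFinset)
    fun x hx y hy hxy _ => by
      simpa using h x (hus (by simpa using hx)) y (hus (by simpa using hy)) hxy
  rw [hufin.encard_eq_coe_toFinset_card, ht.encard_eq_coe_toFinset_card] at hu
  norm_cast at hu
  omega

theorem encard_setOf_eq_le_encard_setOf_deriv_eq_zero_add_one {f f' : ℝ → ℝ} {s : Set ℝ}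
    (hs : s.OrdConnected) (hf : ∀ x ∈ s, HasDerivAt f (f' x) x) (c : ℝ) :
    {x ∈ s | f x = c}.encard ≤ {x ∈ s | f' x = 0}.encard + 1 := by
  refine encard_le_encard_add_one_of_interleaved fun x ⟨hx, hfx⟩ y ⟨hy, hfy⟩ hxy => ?_
  have hIcc : Icc x y ⊆ s := hs.out hx hy
  obtain ⟨z, hz, hf'z⟩ := exists_hasDerivAt_eq_zero hxy
    (fun w hw => (hf w (hIcc hw)).continuousAt.continuousWithinAt) (hfx.trans hfy.symm)
    (fun w hw => hf w (hIcc (Ioo_subset_Icc_self hw)))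
  exact ⟨z, ⟨hIcc (Ioo_subset_Icc_self hz), hf'z⟩, hz⟩

namespace Haas

variable (a b : ℝ)

def posRoots : Set (ℝ × ℝ) := {p | 0 < p.1 ∧ 0 < p.2 ∧ h₁ a 2 p.1 p.2 = 0 ∧ h₂ b 2 p.1 p.2 = 0}

def domain : Set ℝ := {x | 0 < x ∧ b * x < 1}

def critDomain : Set ℝ := {x | 0 < x ∧ b * x < 1 ∧ 1 < 2 * b * x}

def curveY (x : ℝ) : ℝ := (x - b * x ^ 2) ^ (1 / 4 : ℝ)

def reduced (x : ℝ) : ℝ := h₁ a 2 x (curveY b x) / curveY b x ^ 2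

def reducedDeriv (x : ℝ) : ℝ :=
  (2 * x ^ 4 * (7 - 6 * b * x) + (1 - 2 * b * x) * curveY b x) / (4 * curveY b x ^ 6)

def critRatio (x : ℝ) : ℝ :=
  (2 * x ^ 4 * (7 - 6 * b * x)) ^ 4 / ((2 * b * x - 1) ^ 4 * (x - b * x ^ 2))

def cubic (t : ℝ) : ℝ := 168 * t ^ 3 - 428 * t ^ 2 + 366 * t - 105

def critRatioDeriv (x : ℝ) : ℝ :=
  2 * x ^ 4 * (2 * x ^ 4 * (7 - 6 * b * x)) ^ 3 * cubic (b * x) /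
    ((2 * b * x - 1) ^ 5 * (x - b * x ^ 2) ^ 2)

variable {a b}

theorem ordConnected_domain : (domain b).OrdConnected := by
  refine ⟨fun x hx y hy z hz => ⟨hx.1.trans_le hz.1, ?_⟩⟩
  rcases le_total 0 b with hb | hb
  · nlinarith [hy.2, hz.2]
  · nlinarith [hz.1, hx.1]

theorem ordConnected_critDomain : (critDomain b).OrdConnected := by
  refine ⟨fun x hx y hy z hz => ?_⟩
  have hb : 0 < b := by nlinarith [hx.1, hx.2.2]
  exact ⟨hx.1.trans_le hz.1, by nlinarith [hy.2.1, hz.2], by nlinarith [hx.2.2, hz.1]⟩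

theorem sub_mul_sq_pos_of_mem_domain {x : ℝ} (hx : x ∈ domain b) : 0 < x - b * x ^ 2 := by
  nlinarith [hx.1, hx.2]

theorem curveY_pos {x : ℝ} (hx : x ∈ domain b) : 0 < curveY b x :=
  Real.rpow_pos_of_pos (sub_mul_sq_pos_of_mem_domain hx) _

theorem curveY_pow_four {x : ℝ} (hx : x ∈ domain b) : curveY b x ^ 4 = x - b * x ^ 2 := by
  rw [curveY, one_div]
  exact_mod_cast
    Real.rpow_inv_natCast_pow (sub_mul_sq_pos_of_mem_domain hx).le (n := 4) (by norm_num)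

theorem sub_mul_sq_eq_of_h₂_eq_zero {x y : ℝ} (h : h₂ b 2 x y = 0) :
    x - b * x ^ 2 = y ^ 4 := by
  unfold h₂ at h
  linear_combination -h

theorem curveY_eq_of_h₂_eq_zero {x y : ℝ} (hy : 0 < y) (h : h₂ b 2 x y = 0) :
    curveY b x = y := by
  rw [curveY, sub_mul_sq_eq_of_h₂_eq_zero h, one_div]
  exact_mod_cast Real.pow_rpow_inv_natCast hy.le (n := 4) (by norm_num)

theorem mem_domain_of_h₂_eq_zero {x y : ℝ} (hx : 0 < x) (hy : 0 < y) (h : h₂ b 2 x y = 0) :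
    x ∈ domain b := by
  have := sub_mul_sq_eq_of_h₂_eq_zero h
  exact ⟨hx, by nlinarith [pow_pos hy 4]⟩

theorem hasDerivAt_sub_mul_sq (x : ℝ) :
    HasDerivAt (fun y => y - b * y ^ 2) (1 - 2 * b * x) x :=
  ((hasDerivAt_id' x).sub ((hasDerivAt_pow 2 x).const_mul b)).congr_deriv (by ring)

theorem hasDerivAt_curveY {x : ℝ} (hx : x ∈ domain b) :
    HasDerivAt (curveY b) ((1 - 2 * b * x) / (4 * curveY b x ^ 3)) x := by
  have hs := sub_mul_sq_pos_of_mem_domain hx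
  refine ((hasDerivAt_sub_mul_sq x).rpow_const (p := 1 / 4) (Or.inl hs.ne')).congr_deriv ?_
  rw [Real.rpow_sub hs, Real.rpow_one, ← curveY, ← curveY_pow_four hx]
  have := curveY_pos hx
  field_simp

theorem hasDerivAt_reduced {x : ℝ} (hx : x ∈ domain b) :
    HasDerivAt (reduced a b) (reducedDeriv b x) x := by
  have hφ := curveY_pos hx
  have hY := hasDerivAt_curveY hx
  refine ((((hasDerivAt_pow 4 x).add ((hY.pow 2).const_mul a)).sub hY).div (hY.pow 2)
    (pow_pos hφ 2).ne').congr_deriv ?_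
  simp only [Pi.add_apply, Pi.sub_apply, Pi.pow_apply, reducedDeriv]
  field_simp
  linear_combination 16 * x ^ 3 * curveY b x * curveY_pow_four hx

theorem mem_critDomain_and_critRatio_eq_one {x : ℝ} (hx : x ∈ domain b)
    (h : reducedDeriv b x = 0) : x ∈ critDomain b ∧ critRatio b x = 1 := by
  have hφ := curveY_pos hx
  replace h : (2 * b * x - 1) * curveY b x = 2 * x ^ 4 * (7 - 6 * b * x) := by
    rw [reducedDeriv, div_eq_zero_iff, or_iff_left (by positivity)] at h
    linarith
  obtain ⟨hx0, hbx⟩ := hx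
  have hN : 0 < 2 * x ^ 4 * (7 - 6 * b * x) := by
    have : 0 < 7 - 6 * b * x := by linarith
    positivity
  have hD : 1 < 2 * b * x := by nlinarith
  refine ⟨⟨hx0, hbx, hD⟩, (div_eq_one_iff_eq ?_).2 ?_⟩
  · have := sub_mul_sq_pos_of_mem_domain ⟨hx0, hbx⟩
    have : 0 < 2 * b * x - 1 := by linarith
    positivity
  · rw [← curveY_pow_four ⟨hx0, hbx⟩, ← mul_pow, h]

theorem hasDerivAt_critRatio {x : ℝ} (hx : x ∈ critDomain b) :
    HasDerivAt (critRatio b) (critRatioDeriv b x) x := by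
  obtain ⟨hx0, hbx, hD⟩ := hx
  have hs := sub_mul_sq_pos_of_mem_domain ⟨hx0, hbx⟩
  have hD' : 2 * b * x - 1 ≠ 0 := by linarith
  have hN : HasDerivAt (fun x => 2 * x ^ 4 * (7 - 6 * b * x))
      (8 * x ^ 3 * (7 - 6 * b * x) - 12 * b * x ^ 4) x :=
    (((hasDerivAt_pow 4 x).const_mul 2).mul
      (HasDerivAt.const_sub 7 ((hasDerivAt_id' x).const_mul (6 * b)))).congr_deriv (by ring)
  have hDlin : HasDerivAt (fun x => 2 * b * x - 1) (2 * b) x :=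
    (((hasDerivAt_id' x).const_mul (2 * b)).sub_const 1).congr_deriv (by ring)
  refine ((hN.pow 4).div ((hDlin.pow 4).mul (hasDerivAt_sub_mul_sq x))
    (mul_ne_zero (pow_ne_zero 4 hD') hs.ne')).congr_deriv ?_
  simp only [Pi.pow_apply, Pi.mul_apply, critRatioDeriv, cubic, Nat.reduceSub, Nat.cast_ofNat]
  field_simp
  ring

theorem strictMono_cubic : StrictMono cubic := by
  intro u v huv
  have hpos : 0 < 168 * (u ^ 2 + u * v + v ^ 2) - 428 * (u + v) + 366 := by
    nlinarith [sq_nonneg (63 * (u + v) - 107), sq_nonneg (u - v)]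
  have hdiff : cubic v - cubic u =
      (v - u) * (168 * (u ^ 2 + u * v + v ^ 2) - 428 * (u + v) + 366) := by
    unfold cubic; ring
  linarith [mul_pos (sub_pos.2 huv) hpos]

theorem cubic_eq_zero_of_critRatioDeriv_eq_zero {x : ℝ} (hx : x ∈ critDomain b)
    (h : critRatioDeriv b x = 0) : cubic (b * x) = 0 := by
  obtain ⟨hx0, hbx, hD⟩ := hx
  have hN : 0 < 7 - 6 * b * x := by linarith
  have hD' : 0 < 2 * b * x - 1 := by linarith
  have hs := sub_mul_sq_pos_of_mem_domain ⟨hx0, hbx⟩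
  rw [critRatioDeriv, div_eq_zero_iff, or_iff_left (by positivity)] at h
  simpa [hx0.ne', hN.ne'] using h

theorem encard_setOf_critRatioDeriv_eq_zero_le_one :
    {x ∈ critDomain b | critRatioDeriv b x = 0}.encard ≤ 1 := by
  refine encard_le_one_iff.2 fun x y ⟨hx, hx'⟩ ⟨hy, hy'⟩ => ?_
  have hb : b ≠ 0 := by rintro rfl; linarith [hx.2.2]
  exact mul_left_cancel₀ hb <| strictMono_cubic.injective <|
    (cubic_eq_zero_of_critRatioDeriv_eq_zero hx hx').trans
      (cubic_eq_zero_of_critRatioDeriv_eq_zero hy hy').symm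

theorem encard_posRoots_le_encard_setOf_reduced_eq_zero (a b : ℝ) :
    (posRoots a b).encard ≤ {x ∈ domain b | reduced a b x = 0}.encard := by
  refine encard_le_encard_of_injOn (f := Prod.fst) (fun p ⟨hx, hy, h1, h2⟩ => ?_)
    fun p ⟨_, hp, _, hp2⟩ q ⟨_, hq, _, hq2⟩ h => Prod.ext h ?_
  · refine ⟨mem_domain_of_h₂_eq_zero hx hy h2, ?_⟩
    rw [reduced, curveY_eq_of_h₂_eq_zero hy h2, h1, zero_div]
  · rw [← curveY_eq_of_h₂_eq_zero hp hp2, ← curveY_eq_of_h₂_eq_zero hq hq2, h]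

theorem encard_posRoots_le_three (a b : ℝ) : (posRoots a b).encard ≤ 3 :=
  calc _ ≤ {x ∈ domain b | reduced a b x = 0}.encard :=
        encard_posRoots_le_encard_setOf_reduced_eq_zero a b
    _ ≤ {x ∈ domain b | reducedDeriv b x = 0}.encard + 1 :=
        encard_setOf_eq_le_encard_setOf_deriv_eq_zero_add_one ordConnected_domain
          (fun _ => hasDerivAt_reduced) 0
    _ ≤ {x ∈ critDomain b | critRatio b x = 1}.encard + 1 := by
        gcongr ?_ + 1
        exact encard_le_encard fun x hx => mem_critDomain_and_critRatio_eq_one hx.1 hx.2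
    _ ≤ {x ∈ critDomain b | critRatioDeriv b x = 0}.encard + 1 + 1 := by
        gcongr
        exact encard_setOf_eq_le_encard_setOf_deriv_eq_zero_add_one ordConnected_critDomain
          (fun _ => hasDerivAt_critRatio) 1
    _ ≤ 1 + 1 + 1 := by gcongr; exact encard_setOf_critRatioDeriv_eq_zero_le_one
    _ = 3 := by norm_num

end Haas

/-- `E₂` is empty: for all real `a`, `b`, the Haas system `H_{(a,b,2)}` has at
most 4 nondegenerate positive roots. -/
theorem E_two_empty :
    E 2 = ∅ ∧
      ∀ a b : ℝ, {p : ℝ × ℝ | IsNondegPosRoot a b 2 p}.encard ≤ 4 := by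
  have h3 (a b : ℝ) : {p : ℝ × ℝ | IsNondegPosRoot a b 2 p}.encard ≤ 3 :=
    (encard_le_encard (t := Haas.posRoots a b) fun p (hp : IsNondegPosRoot a b 2 p) =>
      ⟨hp.1, hp.2.1, hp.2.2.1, hp.2.2.2.1⟩).trans (Haas.encard_posRoots_le_three a b)
  refine ⟨eq_empty_of_forall_notMem fun q hq => ?_, fun a b => (h3 a b).trans (by norm_num)⟩
  have := (show (5 : ℕ∞) ≤ _ from hq).trans (h3 q.1 q.2)
  norm_num at this
end
end

section
/- The 2×2 polynomial system (x^{106} + (11/10)·y^{53} − (11/10)·y, y^{106} + (11/10)·x^{53} − (11/10)·x) has at least 5 roots (x,y) with x > 0 and y > 0. -/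
open Set

noncomputable def psiH (y : ℝ) : ℝ := (11/10) * (y - y ^ 53)

noncomputable def hH (y : ℝ) : ℝ :=
  y ^ 106 + (11/10) * Real.sqrt (psiH y) - (11/10) * (psiH y) ^ ((106 : ℝ)⁻¹)

lemma contH : Continuous hH := by
  have h1 : Continuous psiH := by unfold psiH; fun_prop
  have h2 : Continuous fun y : ℝ => (psiH y) ^ ((106 : ℝ)⁻¹) :=
    h1.rpow_const (fun x => Or.inr (by norm_num))
  unfold hH
  fun_prop

lemma hH_neg {y b a : ℝ} (hb : 0 ≤ b) (ha : 0 ≤ a)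
    (h1 : psiH y ≤ b ^ 2) (h2 : a ^ 106 ≤ psiH y)
    (h3 : y ^ 106 + (11/10) * b - (11/10) * a < 0) : hH y < 0 := by
  have hsb : Real.sqrt (psiH y) ≤ b :=
    (Real.sqrt_le_sqrt h1).trans_eq (Real.sqrt_sq hb)
  have har : a ≤ (psiH y) ^ ((106 : ℝ)⁻¹) := by
    have h := Real.rpow_le_rpow (by positivity) h2 (by norm_num : (0:ℝ) ≤ (106 : ℝ)⁻¹)
    rwa [show ((106 : ℝ))⁻¹ = (((106 : ℕ) : ℝ))⁻¹ by norm_num,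
      Real.pow_rpow_inv_natCast ha (by norm_num)] at h
  unfold hH; linarith

lemma hH_pos {y b a : ℝ} (hb : 0 ≤ b) (ha : 0 ≤ a) (hψ : 0 ≤ psiH y)
    (h1 : b ^ 2 ≤ psiH y) (h2 : psiH y ≤ a ^ 106)
    (h3 : 0 < y ^ 106 + (11/10) * b - (11/10) * a) : 0 < hH y := by
  have hsb : b ≤ Real.sqrt (psiH y) := by
    have := Real.sqrt_le_sqrt h1
    rwa [Real.sqrt_sq hb] at this
  have har : (psiH y) ^ ((106 : ℝ)⁻¹) ≤ a := by
    have h := Real.rpow_le_rpow hψ h2 (by norm_num : (0:ℝ) ≤ (106 : ℝ)⁻¹)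
    rwa [show ((106 : ℝ))⁻¹ = (((106 : ℕ) : ℝ))⁻¹ by norm_num,
      Real.pow_rpow_inv_natCast ha (by norm_num)] at h
  unfold hH; linarith

lemma psiH_pos {z : ℝ} (h0 : 0 < z) (h1 : z < 1) : 0 < psiH z := by
  have h52 : z ^ 52 < 1 := pow_lt_one₀ h0.le h1 (by norm_num)
  have : z ^ 53 < z := by
    calc z ^ 53 = z * z ^ 52 := by ring
    _ < z * 1 := mul_lt_mul_of_pos_left h52 h0
    _ = z := mul_one z
  unfold psiH; linarith

lemma root_mem {z : ℝ} (h0 : 0 < z) (h1 : z < 1) (hz : hH z = 0) :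
    ((psiH z) ^ ((106 : ℝ)⁻¹), z) ∈ {p : ℝ × ℝ | 0 < p.1 ∧ 0 < p.2 ∧
        p.1 ^ 106 + (11 / 10) * p.2 ^ 53 - (11 / 10) * p.2 = 0 ∧
        p.2 ^ 106 + (11 / 10) * p.1 ^ 53 - (11 / 10) * p.1 = 0} := by
  have hψ : 0 < psiH z := psiH_pos h0 h1
  set x : ℝ := (psiH z) ^ ((106 : ℝ)⁻¹) with hxdef
  have hx : 0 < x := Real.rpow_pos_of_pos hψ _
  have hx106 : x ^ 106 = psiH z := by
    rw [hxdef, show ((106 : ℝ))⁻¹ = (((106 : ℕ) : ℝ))⁻¹ by norm_num]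
    exact Real.rpow_inv_natCast_pow hψ.le (by norm_num)
  have hx53 : x ^ 53 = Real.sqrt (psiH z) := by
    rw [Real.sqrt_eq_rpow, hxdef, ← Real.rpow_natCast (psiH z ^ ((106:ℝ)⁻¹)) 53,
      ← Real.rpow_mul hψ.le]
    norm_num
  refine ⟨hx, h0, ?_, ?_⟩
  · simp only []
    rw [hx106]; unfold psiH; ring
  · simp only []
    rw [hx53]; unfold hH at hz; linarith

lemma exists_root_np {u v : ℝ} (huv : u ≤ v) (hu : hH u < 0) (hv : 0 < hH v) :
    ∃ z, u < z ∧ z < v ∧ hH z = 0 := by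
  obtain ⟨z, hzm, hz0⟩ := intermediate_value_Icc huv contH.continuousOn ⟨hu.le, hv.le⟩
  refine ⟨z, lt_of_le_of_ne hzm.1 ?_, lt_of_le_of_ne hzm.2 ?_, hz0⟩
  · intro h; rw [← h] at hz0; linarith
  · intro h; rw [h] at hz0; linarith

lemma exists_root_pn {u v : ℝ} (huv : u ≤ v) (hu : 0 < hH u) (hv : hH v < 0) :
    ∃ z, u < z ∧ z < v ∧ hH z = 0 := by
  obtain ⟨z, hzm, hz0⟩ := intermediate_value_Icc' huv contH.continuousOn ⟨hv.le, hu.le⟩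
  refine ⟨z, lt_of_le_of_ne hzm.1 ?_, lt_of_le_of_ne hzm.2 ?_, hz0⟩
  · intro h; rw [← h] at hz0; linarith
  · intro h; rw [h] at hz0; linarith

/-- Haas' counter-example: the system
`(x¹⁰⁶ + 1.1·y⁵³ − 1.1·y, y¹⁰⁶ + 1.1·x⁵³ − 1.1·x)` has at least 5 roots in the
open positive quadrant. -/
theorem haas_system_at_least_five_positive_roots :
    5 ≤ {p : ℝ × ℝ | 0 < p.1 ∧ 0 < p.2 ∧
        p.1 ^ 106 + (11 / 10) * p.2 ^ 53 - (11 / 10) * p.2 = 0 ∧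
        p.2 ^ 106 + (11 / 10) * p.1 ^ 53 - (11 / 10) * p.1 = 0}.encard := by
  set S := {p : ℝ × ℝ | 0 < p.1 ∧ 0 < p.2 ∧
        p.1 ^ 106 + (11 / 10) * p.2 ^ 53 - (11 / 10) * p.2 = 0 ∧
        p.2 ^ 106 + (11 / 10) * p.1 ^ 53 - (11 / 10) * p.1 = 0} with hS
  -- signs at six rational test points
  have s0 : hH (1/2) < 0 := by
    apply hH_neg (b := 37081/50000) (a := 99437/100000) (by norm_num) (by norm_num)
    · unfold psiH; norm_num
    · unfold psiH; norm_num
    · norm_num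
  have s1 : 0 < hH (116/125) := by
    apply hH_pos (b := 99991/100000) (a := 1) (by norm_num) (by norm_num)
    · unfold psiH; norm_num
    · unfold psiH; norm_num
    · unfold psiH; norm_num
    · norm_num
  have s2 : hH (24/25) < 0 := by
    apply hH_neg (b := 3013/3125) (a := 99931/100000) (by norm_num) (by norm_num)
    · unfold psiH; norm_num
    · unfold psiH; norm_num
    · norm_num
  have s3 : 0 < hH (249/250) := by
    apply hH_pos (b := 227/500) (a := 49261/50000) (by norm_num) (by norm_num)
    · unfold psiH; norm_num
    · unfold psiH; norm_num
    · unfold psiH; norm_num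
    · norm_num
  have s4 : hH (999993/1000000) < 0 := by
    apply hH_neg (b := 2001/100000) (a := 18577/20000) (by norm_num) (by norm_num)
    · unfold psiH; norm_num
    · unfold psiH; norm_num
    · norm_num
  have s5 : 0 < hH (9999999/10000000) := by
    apply hH_pos (b := 239/100000) (a := 89237/100000) (by norm_num) (by norm_num)
    · unfold psiH; norm_num
    · unfold psiH; norm_num
    · unfold psiH; norm_num
    · norm_num
  -- five roots by IVT
  obtain ⟨z1, hz1l, hz1r, hz1⟩ := exists_root_np (by norm_num) s0 s1
  obtain ⟨z2, hz2l, hz2r, hz2⟩ := exists_root_pn (by norm_num) s1 s2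
  obtain ⟨z3, hz3l, hz3r, hz3⟩ := exists_root_np (by norm_num) s2 s3
  obtain ⟨z4, hz4l, hz4r, hz4⟩ := exists_root_pn (by norm_num) s3 s4
  obtain ⟨z5, hz5l, hz5r, hz5⟩ := exists_root_np (by norm_num) s4 s5
  have hm1 := root_mem (by linarith) (by linarith) hz1
  have hm2 := root_mem (by linarith) (by linarith) hz2
  have hm3 := root_mem (by linarith) (by linarith) hz3
  have hm4 := root_mem (by linarith) (by linarith) hz4
  have hm5 := root_mem (by linarith) (by linarith) hz5
  set p1 : ℝ × ℝ := ((psiH z1) ^ ((106 : ℝ)⁻¹), z1) with hp1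
  set p2 : ℝ × ℝ := ((psiH z2) ^ ((106 : ℝ)⁻¹), z2) with hp2
  set p3 : ℝ × ℝ := ((psiH z3) ^ ((106 : ℝ)⁻¹), z3) with hp3
  set p4 : ℝ × ℝ := ((psiH z4) ^ ((106 : ℝ)⁻¹), z4) with hp4
  set p5 : ℝ × ℝ := ((psiH z5) ^ ((106 : ℝ)⁻¹), z5) with hp5
  have key : ∀ p q : ℝ × ℝ, p.2 ≠ q.2 → p ≠ q := fun p q h hpq => h (by rw [hpq])
  have n12 : p1 ≠ p2 := key _ _ (by simp only [hp1, hp2]; exact ne_of_lt (by linarith))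
  have n13 : p1 ≠ p3 := key _ _ (by simp only [hp1, hp3]; exact ne_of_lt (by linarith))
  have n14 : p1 ≠ p4 := key _ _ (by simp only [hp1, hp4]; exact ne_of_lt (by linarith))
  have n15 : p1 ≠ p5 := key _ _ (by simp only [hp1, hp5]; exact ne_of_lt (by linarith))
  have n23 : p2 ≠ p3 := key _ _ (by simp only [hp2, hp3]; exact ne_of_lt (by linarith))
  have n24 : p2 ≠ p4 := key _ _ (by simp only [hp2, hp4]; exact ne_of_lt (by linarith))
  have n25 : p2 ≠ p5 := key _ _ (by simp only [hp2, hp5]; exact ne_of_lt (by linarith))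
  have n34 : p3 ≠ p4 := key _ _ (by simp only [hp3, hp4]; exact ne_of_lt (by linarith))
  have n35 : p3 ≠ p5 := key _ _ (by simp only [hp3, hp5]; exact ne_of_lt (by linarith))
  have n45 : p4 ≠ p5 := key _ _ (by simp only [hp4, hp5]; exact ne_of_lt (by linarith))
  have hsub : ({p1, p2, p3, p4, p5} : Set (ℝ × ℝ)) ⊆ S := by
    refine Set.insert_subset hm1 (Set.insert_subset hm2 (Set.insert_subset hm3
      (Set.insert_subset hm4 (Set.singleton_subset_iff.mpr hm5))))
  have hcard : ({p1, p2, p3, p4, p5} : Set (ℝ × ℝ)).encard = 5 := by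
    rw [Set.encard_insert_of_notMem (by
        simp only [Set.mem_insert_iff, Set.mem_singleton_iff]; push_neg
        exact ⟨n12, n13, n14, n15⟩),
      Set.encard_insert_of_notMem (by
        simp only [Set.mem_insert_iff, Set.mem_singleton_iff]; push_neg
        exact ⟨n23, n24, n25⟩),
      Set.encard_insert_of_notMem (by
        simp only [Set.mem_insert_iff, Set.mem_singleton_iff]; push_neg
        exact ⟨n34, n35⟩),
      Set.encard_pair n45]
    rfl
  calc (5 : ℕ∞) = ({p1, p2, p3, p4, p5} : Set (ℝ × ℝ)).encard := hcard.symm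
    _ ≤ S.encard := Set.encard_mono hsub
end

section
/- Let n ≥ 1, let ℓ₁, …, ℓ_{n+1} : ℝ → ℝ be real polynomials of degree at most 1, and let b₁, …, b_{n+1} be real numbers, not all zero. Let U = {λ ∈ ℝ : ℓᵢ(λ) > 0 for all i = 1, …, n+1} and let g(λ) = 1 − Π_{i=1}^{n+1} ℓᵢ(λ)^{bᵢ} (real powers) for λ ∈ U. Then the set of isolated zeros of g in U has at most n + 1 elements. -/
/-!
On `U` the equation `g = 0` reads `h = 0` for `h = ∑ bᵢ log ℓᵢ`, and `h' = ∑ bᵢ cᵢ / ℓᵢ` is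
`Q / ∏ ℓᵢ` for a polynomial `Q` of degree at most `n`. If `Q ≠ 0`, then `h'` has at most `n`
zeros on the interval `U`, so by Rolle's theorem `h` has at most `n + 1`. If `Q = 0`, then `h`
is constant on the open interval `U`, so none of its zeros is isolated.
-/

noncomputable section

open Set Polynomial

theorem Set.encard_le_of_forall_finset_card_le {α : Type*} {s : Set α} {k : ℕ}
    (h : ∀ t : Finset α, ↑t ⊆ s → t.card ≤ k) : s.encard ≤ k := by
  rcases s.finite_or_infinite with hs | hs
  · rw [hs.encard_eq_coe_toFinset_card]
    exact_mod_cast h _ (by simp)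
  · obtain ⟨t, hts, ht⟩ := hs.exists_subset_card_eq (k + 1)
    exact absurd (h t hts) (by omega)

theorem encard_zeros_le_encard_zeros_deriv_add_one {U : Set ℝ} (hU : U.OrdConnected)
    {f f' : ℝ → ℝ} (hf : ∀ x ∈ U, HasDerivAt f (f' x) x) :
    {x ∈ U | f x = 0}.encard ≤ {x ∈ U | f' x = 0}.encard + 1 := by
  rcases Set.finite_or_infinite {x ∈ U | f' x = 0} with hT | hT
  · rw [hT.encard_eq_coe_toFinset_card]
    refine Set.encard_le_of_forall_finset_card_le fun s hs =>
      Finset.card_le_of_interleaved fun x hx y hy hxy _ => ?_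
    have hIcc : Icc x y ⊆ U := hU.out (hs hx).1 (hs hy).1
    obtain ⟨z, hz, hz0⟩ := exists_hasDerivAt_eq_zero hxy
      (fun z hz => (hf z (hIcc hz)).continuousAt.continuousWithinAt)
      ((hs hx).2.trans (hs hy).2.symm) (fun z hz => hf z (hIcc (Ioo_subset_Icc_self hz)))
    exact ⟨z, hT.mem_toFinset.2 ⟨hIcc (Ioo_subset_Icc_self hz), hz0⟩, hz⟩
  · simp [hT.encard_eq]

theorem Polynomial.encard_setOf_isRoot_le {R : Type*} [CommRing R] [IsDomain R] {p : R[X]}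
    (hp : p ≠ 0) : {x | p.IsRoot x}.encard ≤ p.natDegree := by
  classical
  have hroots : {x | p.IsRoot x} = ↑p.roots.toFinset := by
    ext x
    simp [hp]
  rw [hroots, Set.encard_coe_eq_coe_finsetCard]
  exact_mod_cast (Multiset.toFinset_card_le _).trans (card_roots' p)

section LogSum

variable {ι : Type*} (c d b : ι → ℝ)

/-- The set `U` of the statement, for the factors `ℓᵢ(x) = cᵢ x + dᵢ`. -/
def posRegion : Set ℝ := {x | ∀ i, 0 < c i * x + d i}

theorem isOpen_posRegion [Finite ι] : IsOpen (posRegion c d) := by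
  simp only [posRegion, ofPred_forall]
  exact isOpen_iInter_of_finite fun i => isOpen_lt continuous_const (by fun_prop)

theorem ordConnected_posRegion : (posRegion c d).OrdConnected := by
  simp only [posRegion, ofPred_forall]
  refine ordConnected_iInter fun i => ⟨fun x hx y hy z hz => ?_⟩
  simp only [mem_ofPred_eq] at hx hy ⊢
  rcases le_total 0 (c i) with hc | hc <;> nlinarith [hz.1, hz.2]

variable [Fintype ι]

def logSum (x : ℝ) : ℝ := ∑ i, b i * Real.log (c i * x + d i)

def logSumDeriv (x : ℝ) : ℝ := ∑ i, b i * c i / (c i * x + d i)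

def logSumDerivNumerator [DecidableEq ι] : ℝ[X] :=
  ∑ i, C (b i * c i) * ∏ j ∈ Finset.univ.erase i, (C (c j) * X + C (d j))

variable {c d}

theorem prod_rpow_eq_exp_logSum {x : ℝ} (hx : x ∈ posRegion c d) :
    ∏ i, (c i * x + d i) ^ b i = Real.exp (logSum c d b x) := by
  rw [logSum, Real.exp_sum]
  refine Finset.prod_congr rfl fun i _ => ?_
  rw [Real.rpow_def_of_pos (hx i), mul_comm]

theorem one_sub_prod_rpow_eq_zero_iff {x : ℝ} (hx : x ∈ posRegion c d) :
    1 - ∏ i, (c i * x + d i) ^ b i = 0 ↔ logSum c d b x = 0 := by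
  rw [prod_rpow_eq_exp_logSum b hx, sub_eq_zero, eq_comm, Real.exp_eq_one_iff]

theorem hasDerivAt_logSum {x : ℝ} (hx : x ∈ posRegion c d) :
    HasDerivAt (logSum c d b) (logSumDeriv c d b x) x := by
  refine HasDerivAt.fun_sum fun i _ => ?_
  have hlin : HasDerivAt (fun y => c i * y + d i) (c i) x := by
    simpa using ((hasDerivAt_id x).const_mul (c i)).add_const (d i)
  simpa only [mul_div_assoc] using (hlin.log (hx i).ne').const_mul (b i)

theorem natDegree_logSumDerivNumerator_le [DecidableEq ι] :
    (logSumDerivNumerator c d b).natDegree ≤ Fintype.card ι - 1 := by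
  refine natDegree_sum_le_of_forall_le _ _ fun i _ => ?_
  refine (natDegree_C_mul_le _ _).trans <| (natDegree_prod_le _ _).trans ?_
  refine (Finset.sum_le_sum fun j _ => natDegree_linear_le).trans ?_
  simp [Finset.card_erase_of_mem]

theorem eval_logSumDerivNumerator [DecidableEq ι] {x : ℝ} (hx : x ∈ posRegion c d) :
    (logSumDerivNumerator c d b).eval x = logSumDeriv c d b x * ∏ i, (c i * x + d i) := by
  simp only [logSumDerivNumerator, logSumDeriv, eval_finsetSum, eval_mul, eval_prod, eval_add,
    eval_C, eval_X, Finset.sum_mul]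
  refine Finset.sum_congr rfl fun i _ => ?_
  rw [← Finset.mul_prod_erase Finset.univ _ (Finset.mem_univ i)]
  field_simp [(hx i).ne']
  simp only [mul_comm (c _) x]

theorem encard_zeros_logSumDeriv_le [DecidableEq ι] (hQ : logSumDerivNumerator c d b ≠ 0) :
    {x ∈ posRegion c d | logSumDeriv c d b x = 0}.encard ≤
      (logSumDerivNumerator c d b).natDegree := by
  refine le_trans (encard_le_encard fun x ⟨hx, hx0⟩ => ?_) (encard_setOf_isRoot_le hQ)
  simp [IsRoot, eval_logSumDerivNumerator b hx, hx0]

theorem logSum_eq_of_logSumDerivNumerator_eq_zero [DecidableEq ι]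
    (hQ : logSumDerivNumerator c d b = 0) {x y : ℝ} (hx : x ∈ posRegion c d)
    (hy : y ∈ posRegion c d) : logSum c d b x = logSum c d b y := by
  have hderiv : ∀ z ∈ posRegion c d, logSumDeriv c d b z = 0 := fun z hz => by
    have hprod : ∏ i, (c i * z + d i) ≠ 0 := (Finset.prod_pos fun i _ => hz i).ne'
    simpa [hQ, hprod] using (eval_logSumDerivNumerator b hz).symm
  refine (isOpen_posRegion c d).is_const_of_deriv_eq_zero
    (ordConnected_posRegion c d).isPreconnected
    (fun z hz => (hasDerivAt_logSum b hz).differentiableAt.differentiableWithinAt)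
    (fun z hz => ?_) hx hy
  rw [(hasDerivAt_logSum b hz).deriv, hderiv z hz, Pi.zero_apply]

end LogSum

theorem sheared_binomial_univariate_bound_general (n : ℕ)
    (c d b : Fin (n + 1) → ℝ) :
    {lam : ℝ | (∀ i, 0 < c i * lam + d i) ∧
        (1 - ∏ i, (c i * lam + d i) ^ b i = 0) ∧
        ∃ V ∈ nhds lam, ∀ μ ∈ V, (∀ i, 0 < c i * μ + d i) →
          1 - ∏ i, (c i * μ + d i) ^ b i = 0 → μ = lam}.encard ≤
      (n : ℕ∞) + 1 := by
  by_cases hQ : logSumDerivNumerator c d b = 0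
  · refine (encard_eq_zero.2 (eq_empty_of_forall_notMem ?_)).trans_le zero_le
    rintro lam ⟨hlam, hzero, V, hV, hiso⟩
    have hVU : V ∩ posRegion c d ∈ nhds lam :=
      Filter.inter_mem hV ((isOpen_posRegion c d).mem_nhds hlam)
    obtain ⟨μ, ⟨hμV, hμU⟩, hμ⟩ := Filter.nonempty_of_mem (sdiff_mem_nhdsWithin_compl hVU {lam})
    refine hμ (hiso μ hμV hμU ((one_sub_prod_rpow_eq_zero_iff b hμU).2 ?_))
    rw [logSum_eq_of_logSumDerivNumerator_eq_zero b hQ hμU hlam]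
    exact (one_sub_prod_rpow_eq_zero_iff b hlam).1 hzero
  · calc _ ≤ {x ∈ posRegion c d | logSum c d b x = 0}.encard :=
          encard_le_encard fun x hx => ⟨hx.1, (one_sub_prod_rpow_eq_zero_iff b hx.1).1 hx.2.1⟩
      _ ≤ {x ∈ posRegion c d | logSumDeriv c d b x = 0}.encard + 1 :=
          encard_zeros_le_encard_zeros_deriv_add_one (ordConnected_posRegion c d)
            fun x hx => hasDerivAt_logSum b hx
      _ ≤ (logSumDerivNumerator c d b).natDegree + 1 := by
          gcongr; exact encard_zeros_logSumDeriv_le b hQ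
      _ ≤ n + 1 := by
          gcongr
          simpa using natDegree_logSumDerivNumerator_le b

/-- A univariate sheared binomial with `n + 1` positive factors
`ℓᵢ(λ) = cᵢ·λ + dᵢ` (polynomials of degree at most 1) and real exponents
`bᵢ`, not all zero, has at most `n + 1` isolated zeros on the region where all
factors are positive. -/
theorem sheared_binomial_univariate_bound (n : ℕ) (hn : 1 ≤ n)
    (c d b : Fin (n + 1) → ℝ) (hb : b ≠ 0) :
    {lam : ℝ | (∀ i, 0 < c i * lam + d i) ∧
        (1 - ∏ i, (c i * lam + d i) ^ b i = 0) ∧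
        ∃ V ∈ nhds lam, ∀ μ ∈ V, (∀ i, 0 < c i * μ + d i) →
          1 - ∏ i, (c i * μ + d i) ^ b i = 0 → μ = lam}.encard ≤
      (n : ℕ∞) + 1 :=
  sheared_binomial_univariate_bound_general n c d b
end
end
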